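/- Let n ≥ 3, let D ⊂ ℝ² be open and connected, and let z, X, Y, N, e₁, …, e_{n−2} : D → ℝ^{n+1} be smooth maps such that at every point (X, Y, e₁, …, e_{n−2}, N) is an orthonormal system in ℝ^{n+1}, and z_u = √E·X, z_v = √G·Y for smooth positive functions E, G on D. Suppose there are smooth functions γ₁, γ₂, ν, λ₁, …, λ_{n−2} on D with ν never zero such that the following Frenet-type system holds: X_u = √E(γ₁Y + Σᵢλᵢeᵢ + νN), Y_u = −√E·γ₁X, (eᵢ)_u = −√E·λᵢX, N_u = −√E·νX, X_v = √G·γ₂Y, Y_v = √G(−γ₂X + Σᵢλᵢeᵢ + νN), (eᵢ)_v = −√G·λᵢY, N_v = −√G·νY. Then ν is constant on D and each λᵢ is constant on D. -/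

import Mathlib

open Real Set
open scoped RealInnerProductSpace

noncomputable section

/-- Partial derivative in the first (`u`) direction. -/
def pu {α : Type*} [NormedAddCommGroup α] [NormedSpace ℝ α]
    (f : ℝ × ℝ → α) (p : ℝ × ℝ) : α :=
  fderiv ℝ f p (1, 0)

/-- Partial derivative in the second (`v`) direction. -/
def pv {α : Type*} [NormedAddCommGroup α] [NormedSpace ℝ α]
    (f : ℝ × ℝ → α) (p : ℝ × ℝ) : α :=
  fderiv ℝ f p (0, 1)

/-- The family `(X, Y, e₁, …, e_{n-2}, N)` is an orthonormal system in `ℝ^{n+1}`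
at every point of `D`. -/
def OrthFrame (n : ℕ) (D : Set (ℝ × ℝ))
    (X Y N : ℝ × ℝ → EuclideanSpace ℝ (Fin (n + 1)))
    (e : Fin (n - 2) → ℝ × ℝ → EuclideanSpace ℝ (Fin (n + 1))) : Prop :=
  ∀ p ∈ D,
    ⟪X p, X p⟫ = 1 ∧ ⟪Y p, Y p⟫ = 1 ∧ ⟪N p, N p⟫ = 1 ∧
    ⟪X p, Y p⟫ = 0 ∧ ⟪X p, N p⟫ = 0 ∧ ⟪Y p, N p⟫ = 0 ∧
    (∀ i, ⟪e i p, e i p⟫ = 1 ∧ ⟪X p, e i p⟫ = 0 ∧ ⟪Y p, e i p⟫ = 0 ∧ ⟪N p, e i p⟫ = 0) ∧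
    (∀ i j, i ≠ j → ⟪e i p, e j p⟫ = 0)

section Auxiliary

variable {α : Type*} [NormedAddCommGroup α] [NormedSpace ℝ α]

lemma fd_smul {c : ℝ × ℝ → ℝ} {V : ℝ × ℝ → α} {p w : ℝ × ℝ}
    (hc : DifferentiableAt ℝ c p) (hV : DifferentiableAt ℝ V p) :
    fderiv ℝ (fun q => c q • V q) p w = fderiv ℝ c p w • V p + c p • fderiv ℝ V p w := by
  rw [fderiv_fun_smul hc hV]
  simp [ContinuousLinearMap.add_apply, ContinuousLinearMap.smul_apply,
    ContinuousLinearMap.smulRight_apply, add_comm]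

lemma fd_mul {c d : ℝ × ℝ → ℝ} {p w : ℝ × ℝ}
    (hc : DifferentiableAt ℝ c p) (hd : DifferentiableAt ℝ d p) :
    fderiv ℝ (fun q => c q * d q) p w = fderiv ℝ c p w * d p + c p * fderiv ℝ d p w := by
  rw [fderiv_fun_mul hc hd]
  simp [ContinuousLinearMap.add_apply, ContinuousLinearMap.smul_apply]
  ring

lemma fd_neg {g : ℝ × ℝ → ℝ} {p w : ℝ × ℝ} :
    fderiv ℝ (fun q => -g q) p w = -(fderiv ℝ g p w) := by
  rw [fderiv_fun_neg]; simp

lemma mixed_symm {W : ℝ × ℝ → α} {p : ℝ × ℝ} (hW : ContDiffAt ℝ (⊤ : ℕ∞) W p) :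
    pv (pu W) p = pu (pv W) p := by
  have hd : DifferentiableAt ℝ (fderiv ℝ W) p :=
    (hW.fderiv_right (m := 1) (WithTop.coe_le_coe.mpr le_top)).differentiableAt (by simp)
  have h1 : ∀ w v : ℝ × ℝ,
      fderiv ℝ (fun q => fderiv ℝ W q w) p v = fderiv ℝ (fderiv ℝ W) p v w := by
    intro w v
    have h : HasFDerivAt (fun q => fderiv ℝ W q w)
        ((ContinuousLinearMap.apply ℝ α w).comp (fderiv ℝ (fderiv ℝ W) p)) p :=
      (ContinuousLinearMap.apply ℝ α w).hasFDerivAt.comp p hd.hasFDerivAt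
    rw [h.fderiv]; rfl
  have symm := hW.isSymmSndFDerivAt (by rw [minSmoothness_of_isRCLikeNormedField]; exact WithTop.coe_le_coe.mpr le_top)
  show fderiv ℝ (fun q => fderiv ℝ W q (1, 0)) p (0, 1)
      = fderiv ℝ (fun q => fderiv ℝ W q (0, 1)) p (1, 0)
  rw [h1, h1]
  exact symm _ _

end Auxiliary

/-- The Frenet-type system (3.3) of an integral surface of the distribution `Δ` of a
bi-umbilical hypersurface of type number two forces `ν` and all `λᵢ` to be constant. -/
theorem biumbilical_invariants_constant
    (n : ℕ) (hn : 3 ≤ n)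
    (D : Set (ℝ × ℝ)) (hD : IsOpen D) (hconn : IsConnected D)
    (z X Y N : ℝ × ℝ → EuclideanSpace ℝ (Fin (n + 1)))
    (e : Fin (n - 2) → ℝ × ℝ → EuclideanSpace ℝ (Fin (n + 1)))
    (Ec Gc γ₁ γ₂ ν : ℝ × ℝ → ℝ) (lam : Fin (n - 2) → ℝ × ℝ → ℝ)
    (hz : ContDiffOn ℝ (⊤ : ℕ∞) z D) (hX : ContDiffOn ℝ (⊤ : ℕ∞) X D) (hY : ContDiffOn ℝ (⊤ : ℕ∞) Y D)
    (hN : ContDiffOn ℝ (⊤ : ℕ∞) N D) (he : ∀ i, ContDiffOn ℝ (⊤ : ℕ∞) (e i) D)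
    (hEc : ContDiffOn ℝ (⊤ : ℕ∞) Ec D) (hGc : ContDiffOn ℝ (⊤ : ℕ∞) Gc D)
    (hγ₁ : ContDiffOn ℝ (⊤ : ℕ∞) γ₁ D) (hγ₂ : ContDiffOn ℝ (⊤ : ℕ∞) γ₂ D)
    (hν : ContDiffOn ℝ (⊤ : ℕ∞) ν D) (hlam : ∀ i, ContDiffOn ℝ (⊤ : ℕ∞) (lam i) D)
    (hEpos : ∀ p ∈ D, 0 < Ec p) (hGpos : ∀ p ∈ D, 0 < Gc p)
    (hνne : ∀ p ∈ D, ν p ≠ 0)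
    (horth : OrthFrame n D X Y N e)
    (hzu : ∀ p ∈ D, pu z p = Real.sqrt (Ec p) • X p)
    (hzv : ∀ p ∈ D, pv z p = Real.sqrt (Gc p) • Y p)
    (hXu : ∀ p ∈ D, pu X p =
      Real.sqrt (Ec p) • (γ₁ p • Y p + (∑ i, lam i p • e i p) + ν p • N p))
    (hYu : ∀ p ∈ D, pu Y p = -(Real.sqrt (Ec p) * γ₁ p) • X p)
    (heu : ∀ p ∈ D, ∀ i, pu (e i) p = -(Real.sqrt (Ec p) * lam i p) • X p)
    (hNu : ∀ p ∈ D, pu N p = -(Real.sqrt (Ec p) * ν p) • X p)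
    (hXv : ∀ p ∈ D, pv X p = (Real.sqrt (Gc p) * γ₂ p) • Y p)
    (hYv : ∀ p ∈ D, pv Y p =
      Real.sqrt (Gc p) • ((-(γ₂ p)) • X p + (∑ i, lam i p • e i p) + ν p • N p))
    (hev : ∀ p ∈ D, ∀ i, pv (e i) p = -(Real.sqrt (Gc p) * lam i p) • Y p)
    (hNv : ∀ p ∈ D, pv N p = -(Real.sqrt (Gc p) * ν p) • Y p) :
    ∀ p ∈ D, ∀ q ∈ D, ν p = ν q ∧ ∀ i, lam i p = lam i q := by
  -- differentiability of the square roots of the metric coefficients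
  have hsD : ∀ p ∈ D, DifferentiableAt ℝ (fun q => Real.sqrt (Ec q)) p := by
    intro p hp
    exact (((contDiffAt_sqrt (n := (⊤ : ℕ∞)) (ne_of_gt (hEpos p hp))).comp p
      (hEc.contDiffAt (hD.mem_nhds hp)))).differentiableAt (by simp)
  have htD : ∀ p ∈ D, DifferentiableAt ℝ (fun q => Real.sqrt (Gc q)) p := by
    intro p hp
    exact (((contDiffAt_sqrt (n := (⊤ : ℕ∞)) (ne_of_gt (hGpos p hp))).comp p
      (hGc.contDiffAt (hD.mem_nhds hp)))).differentiableAt (by simp)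
  have hXd : ∀ p ∈ D, DifferentiableAt ℝ X p := fun p hp =>
    (hX.contDiffAt (hD.mem_nhds hp)).differentiableAt (by simp)
  have hYd : ∀ p ∈ D, DifferentiableAt ℝ Y p := fun p hp =>
    (hY.contDiffAt (hD.mem_nhds hp)).differentiableAt (by simp)
  -- the key mixed-partials computation
  have key : ∀ (W : ℝ × ℝ → EuclideanSpace ℝ (Fin (n + 1))) (f : ℝ × ℝ → ℝ),
      ContDiffOn ℝ (⊤ : ℕ∞) W D → (∀ q ∈ D, DifferentiableAt ℝ f q) →
      (∀ q ∈ D, pu W q = (Real.sqrt (Ec q) * f q) • X q) →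
      (∀ q ∈ D, pv W q = (Real.sqrt (Gc q) * f q) • Y q) →
      ∀ p ∈ D,
        pv (fun q => Real.sqrt (Ec q) * f q) p
            = -(Real.sqrt (Gc p) * f p * (Real.sqrt (Ec p) * γ₁ p)) ∧
        pu (fun q => Real.sqrt (Gc q) * f q) p
            = Real.sqrt (Ec p) * f p * (Real.sqrt (Gc p) * γ₂ p) := by
    intro W f hW hf hWu hWv p hp
    obtain ⟨hXX, hYY, hNN, hXY, hXN, hYN, horthe, -⟩ := horth p hp
    have hYX : ⟪Y p, X p⟫ = 0 := by rw [real_inner_comm]; exact hXY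
    have hcD : DifferentiableAt ℝ (fun q => Real.sqrt (Ec q) * f q) p :=
      (hsD p hp).mul (hf p hp)
    have hdD : DifferentiableAt ℝ (fun q => Real.sqrt (Gc q) * f q) p :=
      (htD p hp).mul (hf p hp)
    have e1 : pv (pu W) p = pv (fun q => Real.sqrt (Ec q) * f q) p • X p
        + (Real.sqrt (Ec p) * f p) • pv X p := by
      have heq : pu W =ᶠ[nhds p] fun q => (Real.sqrt (Ec q) * f q) • X q :=
        Filter.eventuallyEq_of_mem (hD.mem_nhds hp) hWu
      show fderiv ℝ (pu W) p (0, 1) = _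
      rw [heq.fderiv_eq]
      exact fd_smul hcD (hXd p hp)
    have e2 : pu (pv W) p = pu (fun q => Real.sqrt (Gc q) * f q) p • Y p
        + (Real.sqrt (Gc p) * f p) • pu Y p := by
      have heq : pv W =ᶠ[nhds p] fun q => (Real.sqrt (Gc q) * f q) • Y q :=
        Filter.eventuallyEq_of_mem (hD.mem_nhds hp) hWv
      show fderiv ℝ (pv W) p (1, 0) = _
      rw [heq.fderiv_eq]
      exact fd_smul hdD (hYd p hp)
    have EQ := mixed_symm (hW.contDiffAt (hD.mem_nhds hp))
    rw [e1, e2, hXv p hp, hYu p hp] at EQ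
    constructor
    · have h := congrArg (fun A => (⟪X p, A⟫ : ℝ)) EQ
      simp only [inner_add_right, real_inner_smul_right, hXX, hXY, hXN] at h
      linear_combination h
    · have h := congrArg (fun A => (⟪Y p, A⟫ : ℝ)) EQ
      simp only [inner_add_right, real_inner_smul_right, hYY, hYX, hYN] at h
      linear_combination -h
  -- relations for the square roots themselves (from the position vector z)
  have relz : ∀ p ∈ D,
      pv (fun q => Real.sqrt (Ec q)) p
          = -(Real.sqrt (Gc p) * (Real.sqrt (Ec p) * γ₁ p)) ∧
      pu (fun q => Real.sqrt (Gc q)) p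
          = Real.sqrt (Ec p) * (Real.sqrt (Gc p) * γ₂ p) := by
    intro p hp
    have h := key z (fun _ => 1) hz (fun q _ => differentiableAt_const 1)
      (fun q hq => by rw [hzu q hq]; simp)
      (fun q hq => by rw [hzv q hq]; simp) p hp
    simpa using h
  -- partial derivatives of the invariants vanish
  have zero_of : ∀ (W : ℝ × ℝ → EuclideanSpace ℝ (Fin (n + 1))) (f : ℝ × ℝ → ℝ),
      ContDiffOn ℝ (⊤ : ℕ∞) W D → ContDiffOn ℝ (⊤ : ℕ∞) f D →
      (∀ q ∈ D, pu W q = -(Real.sqrt (Ec q) * f q) • X q) →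
      (∀ q ∈ D, pv W q = -(Real.sqrt (Gc q) * f q) • Y q) →
      ∀ p ∈ D, pu f p = 0 ∧ pv f p = 0 := by
    intro W f hW hf hWu hWv p hp
    have hfD : ∀ q ∈ D, DifferentiableAt ℝ f q := fun q hq =>
      (hf.contDiffAt (hD.mem_nhds hq)).differentiableAt (by simp)
    have hfD' : ∀ q ∈ D, DifferentiableAt ℝ (fun x => -f x) q := fun q hq => (hfD q hq).neg
    have h := key W (fun q => -f q) hW hfD'
      (fun q hq => by rw [hWu q hq]; congr 1; ring)
      (fun q hq => by rw [hWv q hq]; congr 1; ring) p hp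
    obtain ⟨h1, h2⟩ := h
    obtain ⟨hz1, hz2⟩ := relz p hp
    have exp1 : pv (fun q => Real.sqrt (Ec q) * -f q) p
        = pv (fun q => Real.sqrt (Ec q)) p * (-f p) + Real.sqrt (Ec p) * (-(pv f p)) := by
      show fderiv ℝ _ p (0, 1) = _
      rw [fd_mul (hsD p hp) (hfD' p hp), fd_neg]
      rfl
    have exp2 : pu (fun q => Real.sqrt (Gc q) * -f q) p
        = pu (fun q => Real.sqrt (Gc q)) p * (-f p) + Real.sqrt (Gc p) * (-(pu f p)) := by
      show fderiv ℝ _ p (1, 0) = _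
      rw [fd_mul (htD p hp) (hfD' p hp), fd_neg]
      rfl
    rw [exp1, hz1] at h1
    rw [exp2, hz2] at h2
    have hsne : Real.sqrt (Ec p) ≠ 0 := ne_of_gt (Real.sqrt_pos.mpr (hEpos p hp))
    have htne : Real.sqrt (Gc p) ≠ 0 := ne_of_gt (Real.sqrt_pos.mpr (hGpos p hp))
    constructor
    · have hEq : Real.sqrt (Gc p) * pu f p = 0 := by linear_combination -h2
      rcases mul_eq_zero.mp hEq with h | h
      · exact absurd h htne
      · exact h
    · have hEq : Real.sqrt (Ec p) * pv f p = 0 := by linear_combination -h1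
      rcases mul_eq_zero.mp hEq with h | h
      · exact absurd h hsne
      · exact h
  have hνzero : ∀ p ∈ D, pu ν p = 0 ∧ pv ν p = 0 := zero_of N ν hN hν hNu hNv
  have hlamzero : ∀ i, ∀ p ∈ D, pu (lam i) p = 0 ∧ pv (lam i) p = 0 := fun i =>
    zero_of (e i) (lam i) (he i) (hlam i) (fun q hq => heu q hq i) (fun q hq => hev q hq i)
  -- a function with vanishing partials on a connected open set is constant
  have const_of : ∀ (f : ℝ × ℝ → ℝ), ContDiffOn ℝ (⊤ : ℕ∞) f D →
      (∀ p ∈ D, pu f p = 0 ∧ pv f p = 0) → ∀ p ∈ D, ∀ q ∈ D, f p = f q := by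
    intro f hf hzero
    have hfz : ∀ p ∈ D, fderiv ℝ f p = 0 := by
      intro p hp
      obtain ⟨h1, h2⟩ := hzero p hp
      refine ContinuousLinearMap.ext fun w => ?_
      have hw : w = w.1 • ((1 : ℝ), (0 : ℝ)) + w.2 • ((0 : ℝ), (1 : ℝ)) := by
        ext <;> simp
      rw [hw, map_add, map_smul, map_smul]
      simp only [pu] at h1
      simp only [pv] at h2
      simp [h1, h2]
    have hloc : ∀ p ∈ D, ∀ᶠ q in nhds p, f q = f p := by
      intro p hp
      obtain ⟨ε, hε, hball⟩ := Metric.isOpen_iff.mp hD p hp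
      have hdiff : DifferentiableOn ℝ f (Metric.ball p ε) :=
        (hf.mono hball).differentiableOn (by simp)
      have hzero' : ∀ x ∈ Metric.ball p ε, fderivWithin ℝ f (Metric.ball p ε) x = 0 := by
        intro x hx
        rw [fderivWithin_of_isOpen Metric.isOpen_ball hx]
        exact hfz x (hball hx)
      filter_upwards [Metric.ball_mem_nhds p hε] with q hq
      exact (convex_ball p ε).is_const_of_fderivWithin_eq_zero hdiff hzero' hq
        (Metric.mem_ball_self hε)
    intro p hp q hq
    by_contra hne
    obtain ⟨-, hpre⟩ := hconn
    have hU : IsOpen {x | x ∈ D ∧ f x = f p} := by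
      rw [isOpen_iff_mem_nhds]
      rintro x ⟨hxD, hxf⟩
      filter_upwards [hloc x hxD, hD.mem_nhds hxD] with y hy hyD
      exact ⟨hyD, hy.trans hxf⟩
    have hV : IsOpen {x | x ∈ D ∧ f x ≠ f p} := by
      rw [isOpen_iff_mem_nhds]
      rintro x ⟨hxD, hxf⟩
      filter_upwards [hloc x hxD, hD.mem_nhds hxD] with y hy hyD
      exact ⟨hyD, fun hcon => hxf (hy ▸ hcon)⟩
    have hsub : D ⊆ {x | x ∈ D ∧ f x = f p} ∪ {x | x ∈ D ∧ f x ≠ f p} := by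
      intro x hx
      by_cases hfx : f x = f p
      · exact Or.inl ⟨hx, hfx⟩
      · exact Or.inr ⟨hx, hfx⟩
    have h1 : (D ∩ {x | x ∈ D ∧ f x = f p}).Nonempty := ⟨p, hp, hp, rfl⟩
    have h2 : (D ∩ {x | x ∈ D ∧ f x ≠ f p}).Nonempty := ⟨q, hq, hq, fun h => hne h.symm⟩
    obtain ⟨x, -, hxU, hxV⟩ := hpre _ _ hU hV hsub h1 h2
    exact hxV.2 hxU.2
  intro p hp q hq
  exact ⟨const_of ν hν hνzero p hp q hq,
    fun i => const_of (lam i) (hlam i) (hlamzero i) p hp q hq⟩
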